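/- arXiv:1312.3173 — 3 statements merged into one kernel-verified Lean document; each statement's English description precedes it below -/
import Mathlib

section
/- Suppose A, B ∈ U(2,1) can be written as A = S₁·conj(S₂) and B = S₂·conj(S₃) for matrices S₁, S₂, S₃ ∈ U(2,1) each satisfying Sᵢ·conj(Sᵢ) = I (lifts of real reflections). Then the commutator A·B·A⁻¹·B⁻¹ has real trace. -/
/-!
Since `Sᵢ conj(Sᵢ) = 1`, the inverses are `A⁻¹ = S₂ conj(S₁)` and `B⁻¹ = S₃ conj(S₂)`, and the
commutator collapses to `P conj(P)` with `P = S₁ conj(S₃) S₂`. Conjugating the trace of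
`P conj(P)` gives the trace of `conj(P) P`, which is the same by cyclicity of the trace.
-/

open Matrix

namespace Matrix

variable {m n R : Type*} [CommRing R] [StarRing R]

theorem map_starRingEnd_map_starRingEnd (M : Matrix m n R) :
    (M.map (starRingEnd R)).map (starRingEnd R) = M := by
  ext i j
  simp

theorem star_trace_mul_map_starRingEnd_self [Fintype n] (P : Matrix n n R) :
    star (P * P.map (starRingEnd R)).trace = (P * P.map (starRingEnd R)).trace :=
  calc star (P * P.map (starRingEnd R)).trace
      = ((P * P.map (starRingEnd R)).map (starRingEnd R)).trace :=
        AddMonoidHom.map_trace (starRingEnd R) _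
    _ = (P.map (starRingEnd R) * P).trace := by
        rw [Matrix.map_mul, map_starRingEnd_map_starRingEnd]
    _ = (P * P.map (starRingEnd R)).trace := trace_mul_comm _ _

theorem inv_mul_map_starRingEnd [Fintype n] [DecidableEq n] {S T : Matrix n n R}
    (hS : S * S.map (starRingEnd R) = 1) (hT : T * T.map (starRingEnd R) = 1) :
    (S * T.map (starRingEnd R))⁻¹ = T * S.map (starRingEnd R) := by
  refine inv_eq_right_inv ?_
  calc S * T.map (starRingEnd R) * (T * S.map (starRingEnd R))
      = S * (T.map (starRingEnd R) * T) * S.map (starRingEnd R) := by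
        simp only [Matrix.mul_assoc]
    _ = 1 := by rw [mul_eq_one_comm.mp hT, Matrix.mul_one, hS]

theorem commutator_eq_mul_map_starRingEnd_self [Fintype n] [DecidableEq n]
    {S₁ S₂ S₃ : Matrix n n R}
    (hs1 : S₁ * S₁.map (starRingEnd R) = 1) (hs2 : S₂ * S₂.map (starRingEnd R) = 1)
    (hs3 : S₃ * S₃.map (starRingEnd R) = 1) :
    let A := S₁ * S₂.map (starRingEnd R)
    let B := S₂ * S₃.map (starRingEnd R)
    let P := S₁ * S₃.map (starRingEnd R) * S₂
    A * B * A⁻¹ * B⁻¹ = P * P.map (starRingEnd R) := by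
  intro A B P
  rw [inv_mul_map_starRingEnd hs1 hs2, inv_mul_map_starRingEnd hs2 hs3]
  simp only [A, B, P, Matrix.map_mul, map_starRingEnd_map_starRingEnd, Matrix.mul_assoc]
  rw [← Matrix.mul_assoc (S₂.map (starRingEnd R)) S₂, mul_eq_one_comm.mp hs2, Matrix.one_mul]

end Matrix

theorem commutator_real_trace_of_decomposition_general
    (A B S₁ S₂ S₃ : Matrix (Fin 3) (Fin 3) ℂ)
    (hs1 : S₁ * S₁.map (starRingEnd ℂ) = 1)
    (hs2 : S₂ * S₂.map (starRingEnd ℂ) = 1)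
    (hs3 : S₃ * S₃.map (starRingEnd ℂ) = 1)
    (hA : A = S₁ * S₂.map (starRingEnd ℂ))
    (hB : B = S₂ * S₃.map (starRingEnd ℂ)) :
    ((A * B * A⁻¹ * B⁻¹).trace).im = 0 := by
  subst hA hB
  rw [commutator_eq_mul_map_starRingEnd_self hs1 hs2 hs3]
  exact Complex.conj_eq_iff_im.mp (star_trace_mul_map_starRingEnd_self _)

/-- If `A = S₁ conj(S₂)`, `B = S₂ conj(S₃)` with each `Sᵢ ∈ U(2,1)` satisfying
`Sᵢ conj(Sᵢ) = 1` (lifts of real reflections), then `[A,B] = A B A⁻¹ B⁻¹` has real trace. -/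
theorem commutator_real_trace_of_decomposition
    (H A B S₁ S₂ S₃ : Matrix (Fin 3) (Fin 3) ℂ)
    (hH : H = !![1, 0, 0; 0, 1, 0; 0, 0, -1])
    (hU1 : S₁ᴴ * H * S₁ = H) (hU2 : S₂ᴴ * H * S₂ = H) (hU3 : S₃ᴴ * H * S₃ = H)
    (hs1 : S₁ * S₁.map (starRingEnd ℂ) = 1)
    (hs2 : S₂ * S₂.map (starRingEnd ℂ) = 1)
    (hs3 : S₃ * S₃.map (starRingEnd ℂ) = 1)
    (hA : A = S₁ * S₂.map (starRingEnd ℂ))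
    (hB : B = S₂ * S₃.map (starRingEnd ℂ)) :
    ((A * B * A⁻¹ * B⁻¹).trace).im = 0 :=
  commutator_real_trace_of_decomposition_general A B S₁ S₂ S₃ hs1 hs2 hs3 hA hB
end

section
/- Let A, B ∈ U(2,1), and let P₁ ∈ ℂ³ be an eigenvector of the commutator [A,B] = ABA⁻¹B⁻¹ with eigenvalue λ₁. Set P₂ = B⁻¹P₁, P₃ = A⁻¹P₂, P₄ = B P₃. Assume ⟨P₃,P₂⟩ ≠ 0 and ⟨P₁,P₄⟩ ≠ 0. Then (⟨P₁,P₂⟩⟨P₃,P₄⟩)/(⟨P₃,P₂⟩⟨P₁,P₄⟩) = λ₁⁻¹ · |⟨P₃,P₄⟩|²/|⟨P₃,P₂⟩|². In particular this cross-ratio is real and positive if and only if λ₁ is real and positive. -/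
/-! `A` and `B` preserve `⟨·,·⟩`, and `B P₂ = P₁`, `A P₃ = P₂`, `A P₄ = λ₁ P₁`. Hence
`⟨P₁,P₄⟩ = ⟨P₂,P₃⟩ = conj ⟨P₃,P₂⟩` and `⟨P₃,P₄⟩ = ⟨P₂, λ₁ P₁⟩ = conj (λ₁ ⟨P₁,P₂⟩)`. Substituting
both into the cross-ratio leaves `λ₁⁻¹ |⟨P₃,P₄⟩|² / |⟨P₃,P₂⟩|²`, a positive real multiple
of `λ₁⁻¹`. -/

open Matrix

/-- The Hermitian form of signature (2,1) on `ℂ³`: `⟨P,Q⟩ = ∑ H i j · P i · conj (Q j)`. -/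
noncomputable def herm (H : Matrix (Fin 3) (Fin 3) ℂ) (P Q : Fin 3 → ℂ) : ℂ :=
  ∑ i, ∑ j, H i j * P i * (starRingEnd ℂ) (Q j)

lemma Matrix.isUnit_det_of_conjTranspose_mul_mul_eq {n R : Type*} [Fintype n] [DecidableEq n]
    [CommRing R] [StarRing R] {H M : Matrix n n R} (hH : IsUnit H.det) (hM : Mᴴ * H * M = H) :
    IsUnit M.det := by
  rw [← hM, det_mul] at hH
  exact isUnit_of_mul_isUnit_right hH

lemma Matrix.mulVec_inv_mulVec {n R : Type*} [Fintype n] [DecidableEq n] [CommRing R]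
    {M : Matrix n n R} (hM : IsUnit M.det) (v : n → R) : M *ᵥ (M⁻¹ *ᵥ v) = v := by
  rw [mulVec_mulVec, mul_nonsing_inv M hM, one_mulVec]

section herm

variable {H : Matrix (Fin 3) (Fin 3) ℂ}

lemma herm_eq_star_dotProduct (P Q : Fin 3 → ℂ) :
    herm H P Q = star Q ⬝ᵥ Hᵀ *ᵥ P := by
  simp only [herm, dotProduct, mulVec, Finset.mul_sum, transpose_apply, Pi.star_apply,
    Complex.star_def]
  rw [Finset.sum_comm]
  exact Finset.sum_congr rfl fun _ _ ↦ Finset.sum_congr rfl fun _ _ ↦ by ring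

lemma herm_mulVec_mulVec {M : Matrix (Fin 3) (Fin 3) ℂ} (hM : Mᴴ * Hᵀ * M = Hᵀ)
    (P Q : Fin 3 → ℂ) : herm H (M *ᵥ P) (M *ᵥ Q) = herm H P Q := by
  rw [herm_eq_star_dotProduct, herm_eq_star_dotProduct, star_mulVec, mulVec_mulVec,
    ← dotProduct_mulVec, mulVec_mulVec, ← Matrix.mul_assoc, hM]

lemma star_herm (hH : H.IsHermitian) (P Q : Fin 3 → ℂ) : star (herm H P Q) = herm H Q P := by
  simp only [herm, star_sum, star_mul', Complex.star_def, Complex.conj_conj]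
  rw [Finset.sum_comm]
  refine Finset.sum_congr rfl fun i _ ↦ Finset.sum_congr rfl fun j _ ↦ ?_
  rw [← Complex.star_def, ← conjTranspose_apply, hH.eq]
  ring

lemma herm_smul_right (c : ℂ) (P Q : Fin 3 → ℂ) :
    herm H P (c • Q) = star c * herm H P Q := by
  simp only [herm, Pi.smul_apply, smul_eq_mul, map_mul, Finset.mul_sum, Complex.star_def]
  exact Finset.sum_congr rfl fun _ _ ↦ Finset.sum_congr rfl fun _ _ ↦ by ring

end herm

open scoped ComplexOrder in
lemma Complex.im_eq_zero_and_re_pos_iff {z : ℂ} : z.im = 0 ∧ 0 < z.re ↔ 0 < z := by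
  rw [Complex.pos_iff, eq_comm, and_comm]

open scoped ComplexOrder in
lemma Complex.inv_mul_ofReal_pos_iff {z : ℂ} {r : ℝ} (hr : 0 < r) :
    (z⁻¹ * r).im = 0 ∧ 0 < (z⁻¹ * r).re ↔ z.im = 0 ∧ 0 < z.re := by
  rw [im_eq_zero_and_re_pos_iff, im_eq_zero_and_re_pos_iff,
    mul_pos_iff_of_pos_right (zero_lt_real.2 hr), RCLike.inv_pos]

theorem commutator_eigenvalue_crossratio_general (H A B : Matrix (Fin 3) (Fin 3) ℂ)
    (hH : H = !![1, 0, 0; 0, 1, 0; 0, 0, -1])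
    (hA : Aᴴ * H * A = H) (hB : Bᴴ * H * B = H)
    (P₁ : Fin 3 → ℂ) (l₁ : ℂ) (hl₁ : l₁ ≠ 0)
    (heig : (A * B * A⁻¹ * B⁻¹).mulVec P₁ = l₁ • P₁)
    (P₂ P₃ P₄ : Fin 3 → ℂ)
    (hP₂ : P₂ = B⁻¹.mulVec P₁) (hP₃ : P₃ = A⁻¹.mulVec P₂) (hP₄ : P₄ = B.mulVec P₃)
    (h32 : herm H P₃ P₂ ≠ 0) (h34 : herm H P₃ P₄ ≠ 0) :
    herm H P₁ P₂ * herm H P₃ P₄ / (herm H P₃ P₂ * herm H P₁ P₄) =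
        l₁⁻¹ * ((‖herm H P₃ P₄‖ : ℂ) ^ 2 /
          (‖herm H P₃ P₂‖ : ℂ) ^ 2) ∧
    ((herm H P₁ P₂ * herm H P₃ P₄ / (herm H P₃ P₂ * herm H P₁ P₄)).im = 0 ∧
        0 < (herm H P₁ P₂ * herm H P₃ P₄ / (herm H P₃ P₂ * herm H P₁ P₄)).re ↔
      l₁.im = 0 ∧ 0 < l₁.re) := by
  have hHt : Hᵀ = H := by subst hH; ext i j; fin_cases i <;> fin_cases j <;> rfl
  have hHh : H.IsHermitian := by subst hH; ext i j; fin_cases i <;> fin_cases j <;> simp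
  have hHdet : IsUnit H.det := by subst hH; simp [det_fin_three]
  have hBP₂ : B *ᵥ P₂ = P₁ := by
    rw [hP₂, mulVec_inv_mulVec (isUnit_det_of_conjTranspose_mul_mul_eq hHdet hB)]
  have hAP₃ : A *ᵥ P₃ = P₂ := by
    rw [hP₃, mulVec_inv_mulVec (isUnit_det_of_conjTranspose_mul_mul_eq hHdet hA)]
  have hAP₄ : A *ᵥ P₄ = l₁ • P₁ := by 
    rw [← heig, hP₄, hP₃, hP₂]
    simp only [mulVec_mulVec, Matrix.mul_assoc]
  rw [← hHt] at hA hB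
  have h14 : herm H P₁ P₄ = star (herm H P₃ P₂) := by
    rw [← hBP₂, hP₄, herm_mulVec_mulVec hB, star_herm hHh]
  have h12 : herm H P₁ P₂ = l₁⁻¹ * star (herm H P₃ P₄) := by
    rw [← herm_mulVec_mulVec hA P₃ P₄, hAP₃, hAP₄, herm_smul_right, star_mul', star_star,
      star_herm hHh, inv_mul_cancel_left₀ hl₁]
  have hcross : herm H P₁ P₂ * herm H P₃ P₄ / (herm H P₃ P₂ * herm H P₁ P₄) =
      l₁⁻¹ * ((‖herm H P₃ P₄‖ : ℂ) ^ 2 / (‖herm H P₃ P₂‖ : ℂ) ^ 2) := by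
    simp only [h12, h14, Complex.star_def]
    rw [mul_assoc, Complex.conj_mul', Complex.mul_conj', mul_div_assoc]
  refine ⟨hcross, ?_⟩
  rw [hcross]
  exact_mod_cast Complex.inv_mul_ofReal_pos_iff
    (div_pos (pow_pos (norm_pos_iff.2 h34) 2) (pow_pos (norm_pos_iff.2 h32) 2))

/-- For `A, B ∈ U(2,1)` and an eigenvector `P₁` of `[A,B]` with eigenvalue `λ₁`, setting
`P₂ = B⁻¹P₁`, `P₃ = A⁻¹P₂`, `P₄ = B P₃`, one has
`⟨P₁,P₂⟩⟨P₃,P₄⟩ / (⟨P₃,P₂⟩⟨P₁,P₄⟩) = λ₁⁻¹ |⟨P₃,P₄⟩|²/|⟨P₃,P₂⟩|²`; in particular this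
cross-ratio is real and positive iff `λ₁` is real and positive. -/
theorem commutator_eigenvalue_crossratio (H A B : Matrix (Fin 3) (Fin 3) ℂ)
    (hH : H = !![1, 0, 0; 0, 1, 0; 0, 0, -1])
    (hA : Aᴴ * H * A = H) (hB : Bᴴ * H * B = H)
    (P₁ : Fin 3 → ℂ) (hP₁ : P₁ ≠ 0) (l₁ : ℂ) (hl₁ : l₁ ≠ 0)
    (heig : (A * B * A⁻¹ * B⁻¹).mulVec P₁ = l₁ • P₁)
    (P₂ P₃ P₄ : Fin 3 → ℂ)
    (hP₂ : P₂ = B⁻¹.mulVec P₁) (hP₃ : P₃ = A⁻¹.mulVec P₂) (hP₄ : P₄ = B.mulVec P₃)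
    (h32 : herm H P₃ P₂ ≠ 0) (h14 : herm H P₁ P₄ ≠ 0) (h34 : herm H P₃ P₄ ≠ 0) :
    herm H P₁ P₂ * herm H P₃ P₄ / (herm H P₃ P₂ * herm H P₁ P₄) =
        l₁⁻¹ * ((‖herm H P₃ P₄‖ : ℂ) ^ 2 /
          (‖herm H P₃ P₂‖ : ℂ) ^ 2) ∧
    ((herm H P₁ P₂ * herm H P₃ P₄ / (herm H P₃ P₂ * herm H P₁ P₄)).im = 0 ∧
        0 < (herm H P₁ P₂ * herm H P₃ P₄ / (herm H P₃ P₂ * herm H P₁ P₄)).re ↔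
      l₁.im = 0 ∧ 0 < l₁.re) :=
  commutator_eigenvalue_crossratio_general H A B hH hA hB P₁ l₁ hl₁ heig P₂ P₃ P₄ hP₂ hP₃ hP₄ h32
    h34
end

section
/- For A ∈ SU(2,1), define f(z) = |z|⁴ − 8 Re(z³) + 18|z|² − 27 with z = Tr(A). Then f(Tr A) equals the resultant of the characteristic polynomial χ_A(X) = X³ − z X² + conj(z) X − 1 and its derivative χ_A'(X). In particular, A has a repeated eigenvalue if and only if f(Tr A) = 0. -/
open Matrix Polynomial

/-! Since `H² = 1`, the relation `Aᴴ H A = H` together with `det A = 1` exhibits `H Aᴴ H` as the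
adjugate of `A`, whose trace is `conj (Tr A)`; so `χ_A = X³ − z X² + conj(z) X − 1`.
Goldman's function is the discriminant of this cubic, which is `−Res(χ_A, χ_A')`, and over `ℂ`
a cubic has a repeated root exactly when its discriminant vanishes. -/

/-- The Sylvester matrix of `χ_A(X) = X³ − z X² + conj(z) X − 1` and its derivative
`χ_A'(X) = 3X² − 2z X + conj(z)`. -/
noncomputable def sylv (z : ℂ) : Matrix (Fin 5) (Fin 5) ℂ :=
  !![1, -z, (starRingEnd ℂ) z, -1, 0;
     0, 1, -z, (starRingEnd ℂ) z, -1;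
     3, -2 * z, (starRingEnd ℂ) z, 0, 0;
     0, 3, -2 * z, (starRingEnd ℂ) z, 0;
     0, 0, 3, -2 * z, (starRingEnd ℂ) z]

lemma Matrix.adjugate_eq_of_conjTranspose_mul_mul_eq {R n : Type*} [CommRing R] [StarRing R]
    [Fintype n] [DecidableEq n] {H A : Matrix n n R} (hH : H * H = 1) (hdet : A.det = 1)
    (hA : Aᴴ * H * A = H) : A.adjugate = H * Aᴴ * H := by
  have hinv : H * Aᴴ * H * A = 1 := by
    rw [show H * Aᴴ * H * A = H * (Aᴴ * H * A) by simp only [Matrix.mul_assoc], hA, hH]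
  calc A.adjugate = H * Aᴴ * H * A * A.adjugate := by rw [hinv, Matrix.one_mul]
    _ = H * Aᴴ * H := by rw [Matrix.mul_assoc, mul_adjugate, hdet, one_smul, Matrix.mul_one]

lemma Matrix.trace_adjugate_eq_star_trace {R n : Type*} [CommRing R] [StarRing R]
    [Fintype n] [DecidableEq n] {H A : Matrix n n R} (hH : H * H = 1) (hdet : A.det = 1)
    (hA : Aᴴ * H * A = H) : A.adjugate.trace = star A.trace := by
  rw [adjugate_eq_of_conjTranspose_mul_mul_eq hH hdet hA, trace_mul_cycle, hH, Matrix.one_mul,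
    trace_conjTranspose]

lemma Matrix.charpoly_fin_three {R : Type*} [CommRing R] (M : Matrix (Fin 3) (Fin 3) R) :
    M.charpoly = (⟨1, -M.trace, M.adjugate.trace, -M.det⟩ : Cubic R).toPoly := by
  simp [Matrix.charpoly, det_fin_three, trace_fin_three, adjugate_fin_three, Cubic.toPoly,
    charmatrix_apply_eq, charmatrix_apply_ne, Fin.ext_iff]
  ring

lemma Cubic.exists_one_lt_count_roots_iff_discr_eq_zero {K : Type*} [Field K] [IsAlgClosed K]
    [DecidableEq K] {P : Cubic K} (ha : P.a ≠ 0) :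
    (∃ μ, 1 < P.toPoly.roots.count μ) ↔ P.discr = 0 := by
  have hnodup := discr_ne_zero_iff_roots_nodup ha (IsAlgClosed.splits (P.toPoly.map (.id K)))
  rw [map_roots, Polynomial.map_id, Multiset.nodup_iff_count_le_one] at hnodup
  rw [← not_iff_not]
  simp only [not_exists, not_lt]
  exact hnodup.symm

lemma sylv_det (z : ℂ) : (sylv z).det =
    27 + 4 * (starRingEnd ℂ) z ^ 3 - 18 * z * (starRingEnd ℂ) z
      - z ^ 2 * (starRingEnd ℂ) z ^ 2 + 4 * z ^ 3 := by
  simp [sylv, det_succ_row_zero, Fin.sum_univ_succ, Fin.succAbove]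
  ring

lemma goldman_eq_neg_det_sylv (z : ℂ) :
    ((‖z‖ ^ 4 - 8 * (z ^ 3).re + 18 * ‖z‖ ^ 2 - 27 : ℝ) : ℂ) = -(sylv z).det := by
  have hnorm : ((‖z‖ : ℝ) : ℂ) ^ 2 = z * (starRingEnd ℂ) z := by
    rw [Complex.mul_conj, ← Complex.sq_norm]; push_cast; ring
  have hre : (((z ^ 3).re : ℝ) : ℂ) = (z ^ 3 + (starRingEnd ℂ) z ^ 3) / 2 := by
    rw [← map_pow, Complex.add_conj]; push_cast; ring
  rw [sylv_det]
  push_cast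
  linear_combination ((‖z‖ : ℂ) ^ 2 + z * (starRingEnd ℂ) z + 18) * hnorm - 8 * hre

lemma discr_eq_neg_det_sylv (z : ℂ) :
    (⟨1, -z, (starRingEnd ℂ) z, -1⟩ : Cubic ℂ).discr = -(sylv z).det := by
  rw [sylv_det, Cubic.discr]; ring

/-- Goldman's function `f(z) = |z|⁴ − 8 Re(z³) + 18|z|² − 27` at `z = Tr A` equals (with the
standard normalization `(−1)^{n(n−1)/2}`) the resultant of `χ_A` and `χ_A'`; in particular
`A ∈ SU(2,1)` has a repeated eigenvalue iff `f(Tr A) = 0`. -/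
theorem goldman_function_resultant (H A : Matrix (Fin 3) (Fin 3) ℂ)
    (hH : H = !![1, 0, 0; 0, 1, 0; 0, 0, -1])
    (hdet : A.det = 1) (hA : Aᴴ * H * A = H) :
    ((‖A.trace‖ ^ 4 - 8 * (A.trace ^ 3).re + 18 * ‖A.trace‖ ^ 2 - 27 : ℝ) : ℂ)
        = (-1 : ℂ) ^ (3 * (3 - 1) / 2) * (sylv A.trace).det ∧
    ((∃ μ : ℂ, 1 < A.charpoly.roots.count μ) ↔
      ‖A.trace‖ ^ 4 - 8 * (A.trace ^ 3).re + 18 * ‖A.trace‖ ^ 2 - 27 = 0) := by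
  have hHH : H * H = 1 := by subst hH; simp [← Matrix.one_fin_three]
  have hcp : A.charpoly = (⟨1, -A.trace, (starRingEnd ℂ) A.trace, -1⟩ : Cubic ℂ).toPoly := by
    rw [charpoly_fin_three, trace_adjugate_eq_star_trace hHH hdet hA, hdet]; rfl
  refine ⟨by rw [goldman_eq_neg_det_sylv]; norm_num, ?_⟩
  rw [hcp, Cubic.exists_one_lt_count_roots_iff_discr_eq_zero one_ne_zero,
    discr_eq_neg_det_sylv, ← goldman_eq_neg_det_sylv, Complex.ofReal_eq_zero]
end
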